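/- arXiv:2308.05834 — 7 statements merged into one kernel-verified Lean document; each statement's English description precedes it below -/
import Mathlib

section
/- For positive integers k₁, k₂ and any integer r, D_{k₁k₂}(k₂(r+1) - 1) = k₂ · D_{k₁}(r). -/
/-- Coefficient of `x^r` in `((1-x^k)/(1-x))^2`. -/
noncomputable def Dk (k : ℕ) (r : ℤ) : ℤ :=
  if 0 ≤ r then ((∑ i ∈ Finset.range k, (Polynomial.X : Polynomial ℤ) ^ i) ^ 2).coeff r.toNat
  else 0

open Polynomial Finset in
lemma coeff_S (k n : ℕ) :
    (∑ i ∈ Finset.range k, (X : Polynomial ℤ) ^ i).coeff n = if n < k then 1 else 0 := by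
  rw [finset_sum_coeff]
  simp [coeff_X_pow, Finset.sum_ite_eq, Finset.mem_range]

open Polynomial Finset in
lemma coeff_sq (k n : ℕ) :
    ((∑ i ∈ Finset.range k, (X : Polynomial ℤ) ^ i) ^ 2).coeff n
      = ((min (n + 1) k - (n + 1 - k) : ℕ) : ℤ) := by
  rw [sq, coeff_mul, Finset.Nat.sum_antidiagonal_eq_sum_range_succ_mk]
  simp only [coeff_S]
  have : ∀ a ∈ Finset.range (n + 1),
      (if a < k then (1:ℤ) else 0) * (if n - a < k then 1 else 0)
        = if a ∈ Finset.Ico (n + 1 - k) (min (n + 1) k) then 1 else 0 := by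
    intro a ha
    simp only [Finset.mem_range] at ha
    simp only [Finset.mem_Ico, lt_min_iff]
    split_ifs <;> omega
  rw [Finset.sum_congr rfl this, Finset.sum_ite_mem, Finset.sum_const,
    Finset.range_eq_Ico, Finset.Ico_inter_Ico]
  have : max 0 (n + 1 - k) = n + 1 - k := by omega
  have h2 : min (n + 1) (min (n + 1) k) = min (n + 1) k := by omega
  rw [this, h2, Nat.card_Ico]
  simp

lemma nat_helper (k₂ k₁ m : ℕ) :
    min (k₂ * m) (k₂ * k₁) - (k₂ * m - k₂ * k₁) = k₂ * (min m k₁ - (m - k₁)) := by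
  rcases le_total m k₁ with h | h
  · rw [min_eq_left (Nat.mul_le_mul_left _ h), min_eq_left h,
      Nat.sub_eq_zero_of_le h, Nat.sub_eq_zero_of_le (Nat.mul_le_mul_left _ h)]
    simp
  · rw [min_eq_right (Nat.mul_le_mul_left _ h), min_eq_right h, Nat.mul_sub, Nat.mul_sub]

theorem stmt2 (k₁ k₂ : ℕ) (hk₁ : 1 ≤ k₁) (hk₂ : 1 ≤ k₂) (r : ℤ) :
    Dk (k₁ * k₂) ((k₂ : ℤ) * (r + 1) - 1) = (k₂ : ℤ) * Dk k₁ r := by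
  unfold Dk
  by_cases hr : 0 ≤ r
  · have h2 : (0:ℤ) ≤ (k₂ : ℤ) * (r + 1) - 1 := by
      have : (1:ℤ) ≤ (k₂ : ℤ) * (r + 1) := by
        have : (1:ℤ) ≤ (k₂:ℤ) := by exact_mod_cast hk₂
        nlinarith
      omega
    rw [if_pos hr, if_pos h2, coeff_sq, coeff_sq]
    obtain ⟨m, rfl⟩ : ∃ m : ℕ, r = (m : ℤ) := ⟨r.toNat, (Int.toNat_of_nonneg hr).symm⟩
    have hk : 1 ≤ k₂ * (m + 1) := Nat.mul_pos hk₂ (Nat.succ_pos _)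
    have hn : ((k₂ : ℤ) * ((m : ℤ) + 1) - 1).toNat = k₂ * (m + 1) - 1 := by
      rw [show ((k₂ : ℤ) * ((m : ℤ) + 1) - 1) = ((k₂ * (m + 1) - 1 : ℕ) : ℤ) by
        push_cast [Nat.cast_sub hk]; ring, Int.toNat_natCast]
    rw [hn, Int.toNat_natCast, ← Nat.cast_mul]
    congr 1
    have h1 : k₂ * (m + 1) - 1 + 1 = k₂ * (m + 1) := by omega
    rw [h1, Nat.mul_comm k₁ k₂]
    exact nat_helper k₂ k₁ (m + 1)
  · have h2 : ¬ (0:ℤ) ≤ (k₂ : ℤ) * (r + 1) - 1 := by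
      have h3 : r + 1 ≤ 0 := by omega
      have : (k₂ : ℤ) * (r + 1) ≤ 0 := mul_nonpos_of_nonneg_of_nonpos (by positivity) h3
      omega
    rw [if_neg hr, if_neg h2, mul_zero]
end

section
/- Let B ∈ ℤ^{n×n}, n ≥ 2, with det B > 0 and each row of B having gcd 1. Let A = adj B and Γ = {exp(2πi A⁻¹ν) : ν ∈ ℤ^{n×1}} ⊂ 𝕋ⁿ. Then for each 1 ≤ j ≤ n, the projection Γ_j = {γ_j : (γ₁,...,γ_n)ᵀ ∈ Γ} of Γ onto the j-th coordinate is a cyclic group of order det B. -/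
/-!
Since `adj B = det B • B⁻¹`, we have `(adj B)⁻¹ = B / det B`, so the `j`-th coordinate of
`exp(2πi (adj B)⁻¹ ν)` is `ζ ^ (B ν)_j` with `ζ = exp(2πi / det B)` a primitive `det B`-th root of
unity. As row `j` of `B` has gcd `1`, Bézout makes `ν ↦ (B ν)_j` surjective onto `ℤ`, so `Γ_j` is
the group generated by `ζ`, which has `det B` elements.
-/

open Complex

lemma Finset.surjective_sum_mul_of_gcd_eq_one {R ι : Type*} [CommRing R] [IsBezout R]
    [NormalizedGCDMonoid R] (s : Finset ι) {f : ι → R} (h : s.gcd f = 1) :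
    Function.Surjective fun ν : ι → R => ∑ k ∈ s, f k * ν k := by
  intro m
  obtain ⟨g, hg⟩ := s.gcd_eq_sum_mul f
  refine ⟨m • g, ?_⟩
  simp only [Pi.smul_apply, smul_eq_mul, mul_left_comm _ m, ← Finset.mul_sum, ← hg, h, mul_one]

lemma Matrix.inv_adjugate_map {R K n : Type*} [CommRing R] [Field K] [Fintype n] [DecidableEq n]
    (f : R →+* K) (B : Matrix n n R) (h : f B.det ≠ 0) :
    (B.adjugate.map f)⁻¹ = (f B.det)⁻¹ • B.map f := by
  have hadj : B.adjugate.map f = (B.map f).adjugate := f.map_adjugate B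
  have hdet : (B.map f).det = f B.det := (f.map_det B).symm
  refine Matrix.inv_eq_left_inv ?_
  rw [hadj, Matrix.smul_mul, Matrix.mul_adjugate, hdet, smul_smul, inv_mul_cancel₀ h, one_smul]

lemma IsPrimitiveRoot.setOf_exists_zpow_eq_nthRootsFinset {K : Type*} [Field K] {ζ : K} {k : ℕ}
    [NeZero k] (hζ : IsPrimitiveRoot ζ k) :
    {z : K | ∃ m : ℤ, z = ζ ^ m} = Polynomial.nthRootsFinset k (1 : K) := by
  ext z
  simp only [Set.mem_ofPred_eq, Finset.mem_coe, Polynomial.mem_nthRootsFinset (NeZero.pos k)]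
  constructor
  · rintro ⟨m, rfl⟩
    rw [← zpow_natCast, ← zpow_mul, mul_comm, zpow_mul, hζ.zpow_eq_one, one_zpow]
  · intro hz
    obtain ⟨i, -, rfl⟩ := hζ.eq_pow_of_pow_eq_one hz
    exact ⟨i, (zpow_natCast ζ i).symm⟩

lemma IsPrimitiveRoot.ncard_setOf_exists_zpow {K : Type*} [Field K] {ζ : K} {k : ℕ} [NeZero k]
    (hζ : IsPrimitiveRoot ζ k) : Set.ncard {z : K | ∃ m : ℤ, z = ζ ^ m} = k := by
  rw [hζ.setOf_exists_zpow_eq_nthRootsFinset, Set.ncard_coe_finset, hζ.card_nthRootsFinset]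

lemma Complex.exp_two_pi_I_mul_ratCast_div (m : ℤ) (d : ℕ) :
    exp (2 * Real.pi * I * ((m / d : ℚ) : ℂ)) = exp (2 * Real.pi * I / d) ^ m := by
  rw [← exp_int_mul]
  push_cast
  ring_nf

theorem stmt12_general (n : ℕ) (B : Matrix (Fin n) (Fin n) ℤ) (hB : 0 < B.det)
    (hgcd : ∀ j, Finset.univ.gcd (fun k => B j k) = 1) (j : Fin n) :
    ∃ ζ : ℂ,
      {z : ℂ | ∃ γ ∈ {γ : Fin n → ℂ | ∃ ν : Fin n → ℤ, ∀ i,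
          γ i = Complex.exp (2 * Real.pi * Complex.I *
            ((∑ k, ((B.adjugate).map (fun a => (a : ℚ)))⁻¹ i k * (ν k : ℚ) : ℚ) : ℂ))},
        γ j = z} = {z : ℂ | ∃ m : ℤ, z = ζ ^ m} ∧
      Set.ncard {z : ℂ | ∃ m : ℤ, z = ζ ^ m} = B.det.toNat := by
  set d := B.det.toNat
  have hd : (d : ℤ) = B.det := Int.toNat_of_nonneg hB.le
  have : NeZero d := ⟨by omega⟩
  set ζ := exp (2 * Real.pi * I / d)
  have hexponent : ∀ (ν : Fin n → ℤ) i,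
      ∑ k, ((B.adjugate).map (fun a => (a : ℚ)))⁻¹ i k * (ν k : ℚ)
        = ((∑ k, B i k * ν k : ℤ) / d : ℚ) := by
    have hinv : (B.adjugate.map (fun a => (a : ℚ)))⁻¹
        = (B.det : ℚ)⁻¹ • B.map (fun a => (a : ℚ)) :=
      Matrix.inv_adjugate_map (Int.castRingHom ℚ) B (by simpa using hB.ne')
    intro ν i
    rw [hinv]
    have hdQ : (d : ℚ) = B.det := by exact_mod_cast hd
    simp [hdQ, div_eq_inv_mul, Finset.mul_sum, mul_assoc]
  refine ⟨ζ, ?_, (Complex.isPrimitiveRoot_exp d (NeZero.ne d)).ncard_setOf_exists_zpow⟩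
  ext z
  simp only [Set.mem_ofPred_eq]
  constructor
  · rintro ⟨γ, ⟨ν, hγ⟩, rfl⟩
    exact ⟨_, by rw [hγ, hexponent, exp_two_pi_I_mul_ratCast_div]⟩
  · rintro ⟨m, rfl⟩
    obtain ⟨ν, hν⟩ := Finset.surjective_sum_mul_of_gcd_eq_one _ (hgcd j) m
    refine ⟨_, ⟨ν, fun i => rfl⟩, ?_⟩
    simp only [hexponent, exp_two_pi_I_mul_ratCast_div, hν, ζ]

/-- The projection `Γ_j` of the deck group `Γ` onto the `j`-th coordinate is a cyclic
group of order `det B`. -/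
theorem stmt12 (n : ℕ) (hn : 2 ≤ n) (B : Matrix (Fin n) (Fin n) ℤ) (hB : 0 < B.det)
    (hgcd : ∀ j, Finset.univ.gcd (fun k => B j k) = 1) (j : Fin n) :
    ∃ ζ : ℂ,
      {z : ℂ | ∃ γ ∈ {γ : Fin n → ℂ | ∃ ν : Fin n → ℤ, ∀ i,
          γ i = Complex.exp (2 * Real.pi * Complex.I *
            ((∑ k, ((B.adjugate).map (fun a => (a : ℚ)))⁻¹ i k * (ν k : ℚ) : ℚ) : ℂ))},
        γ j = z} = {z : ℂ | ∃ m : ℤ, z = ζ ^ m} ∧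
      Set.ncard {z : ℂ | ∃ m : ℤ, z = ζ ^ m} = B.det.toNat :=
  stmt12_general n B hB hgcd j
end

section
/- Let α, β ∈ ℕⁿ be such that α₁ ≠ 0, gcd(α₁,...,α_n,β₁,...,β_n) = 1, and for each j, α_j ≠ 0 implies β_j = 0 and β_j ≠ 0 implies α_j = 0. Then the polynomial p(t) = t₁^{α₁}···t_n^{α_n} − t₁^{β₁}···t_n^{β_n} is irreducible in ℂ[t₁,...,t_n]. -/
/-!
Newton polytope argument. For a weight `w : σ → ℤ`, the `w`-maximal exponents of a product
over a domain include a sum of `w`-maximal exponents of the factors. If `f * g = X^a - X^b`,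
then for every `w` orthogonal to `δ = a - b` the supports of `f` and `g` have constant
`w`-weight, so differences of their exponents are integer multiples of the primitive vector `δ`.
The `δ`-widths of the supports of `f` and `g` are then multiples of `δ ⬝ᵥ δ` adding up to at
most `δ ⬝ᵥ δ`, so one factor is a monomial, and it is constant because `a` and `b` have
disjoint supports.
-/

open MvPolynomial Finset Matrix
open Finsupp (weight weight_apply weight_eq_sum)

namespace MvPolynomial

variable {σ R M : Type*} [CommSemiring R] [NoZeroDivisors R]
  [AddCommMonoid M] [LinearOrder M] [IsOrderedCancelAddMonoid M]

theorem exists_mem_support_mul_add_weight_le (w : σ → M) {f g : MvPolynomial σ R}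
    {d e : σ →₀ ℕ} (hd : d ∈ f.support) (he : e ∈ g.support) :
    ∃ m ∈ (f * g).support, weight w d + weight w e ≤ weight w m := by
  obtain ⟨d₀, hd₀, hd₀max⟩ := f.support.exists_max_image (weight w) ⟨d, hd⟩
  obtain ⟨e₀, he₀, he₀max⟩ := g.support.exists_max_image (weight w) ⟨e, he⟩
  have hA : (f.support.filter (weight w · = weight w d₀)).Nonempty :=
    ⟨d₀, mem_filter.mpr ⟨hd₀, rfl⟩⟩
  have hB : (g.support.filter (weight w · = weight w e₀)).Nonempty :=
    ⟨e₀, mem_filter.mpr ⟨he₀, rfl⟩⟩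
  -- a sum of `w`-maximal exponents reached by only one pair cannot cancel in `f * g`
  obtain ⟨a₀, ha₀, b₀, hb₀, huniq⟩ := UniqueSums.uniqueAdd_of_nonempty hA hB
  rw [mem_filter] at ha₀ hb₀
  have huniq' : UniqueAdd f.support g.support a₀ b₀ := by
    intro a b ha hb hab
    have hwa := hd₀max a ha
    have hwb := he₀max b hb
    have hsum : weight w a + weight w b = weight w d₀ + weight w e₀ := by
      rw [← map_add, hab, map_add, ha₀.2, hb₀.2]
    refine huniq (mem_filter.mpr ⟨ha, ?_⟩) (mem_filter.mpr ⟨hb, ?_⟩) hab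
    · exact le_antisymm hwa
        (le_of_add_le_add_right (hsum.symm.trans_le (add_le_add_right hwb _)))
    · exact le_antisymm hwb
        (le_of_add_le_add_left (hsum.symm.trans_le (add_le_add_left hwa _)))
  refine ⟨a₀ + b₀, ?_, ?_⟩
  · rw [mem_support_iff, show coeff (a₀ + b₀) (f * g) = coeff a₀ f * coeff b₀ g from
      AddMonoidAlgebra.coeff_mul_add_of_uniqueAdd huniq']
    exact mul_ne_zero (mem_support_iff.mp ha₀.1) (mem_support_iff.mp hb₀.1)
  · rw [map_add, ha₀.2, hb₀.2]
    exact add_le_add (hd₀max d hd) (he₀max e he)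

end MvPolynomial

theorem exists_eq_smul_of_forall_dotProduct_eq_zero {σ : Type*} [Fintype σ] {δ x : σ → ℤ}
    (hδ : univ.gcd δ = 1) (h : ∀ w : σ → ℤ, w ⬝ᵥ δ = 0 → w ⬝ᵥ x = 0) :
    ∃ k : ℤ, x = k • δ := by
  classical
  have hcross : ∀ i j, x i * δ j = x j * δ i := fun i j => by
    have := h (Pi.single i (δ j) - Pi.single j (δ i)) (by
      rw [sub_dotProduct, single_dotProduct, single_dotProduct, mul_comm, sub_self])
    rw [sub_dotProduct, single_dotProduct, single_dotProduct, sub_eq_zero] at this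
    linarith
  obtain ⟨c, hc⟩ := univ.gcd_eq_sum_mul δ
  refine ⟨∑ j, x j * c j, funext fun i => ?_⟩
  calc x i = x i * ∑ j, δ j * c j := by rw [← hc, hδ, mul_one]
    _ = (∑ j, x j * c j) * δ i := by
      rw [Finset.mul_sum, Finset.sum_mul]
      exact sum_congr rfl fun j _ => by rw [← mul_assoc, hcross]; ring

theorem ne_zero_of_univ_gcd_eq_one {σ : Type*} [Fintype σ] {δ : σ → ℤ} (h : univ.gcd δ = 1) :
    δ ≠ 0 := by
  rintro rfl
  exact zero_ne_one ((gcd_eq_zero_iff.mpr fun _ _ => rfl).symm.trans h)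

section Binomial

variable {σ : Type*} {a b : σ →₀ ℕ}

def expDiff (d d' : σ →₀ ℕ) : σ → ℤ := fun i => (d i : ℤ) - d' i

theorem weight_sub_weight [Fintype σ] (w : σ → ℤ) (d d' : σ →₀ ℕ) :
    weight w d - weight w d' = w ⬝ᵥ expDiff d d' := by
  simp only [weight_eq_sum, dotProduct, expDiff, nsmul_eq_mul, ← sum_sub_distrib]
  exact sum_congr rfl fun i _ => by ring

theorem expDiff_eq_zero_iff {d d' : σ →₀ ℕ} : expDiff d d' = 0 ↔ d = d' := by
  simp only [funext_iff, Finsupp.ext_iff, expDiff, Pi.zero_apply, sub_eq_zero, Nat.cast_inj]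

theorem expDiff_swap (d d' : σ →₀ ℕ) : expDiff d' d = -expDiff d d' :=
  funext fun _ => (neg_sub _ _).symm

theorem gcd_expDiff_eq_one [Fintype σ] (hdisj : ∀ i, a i = 0 ∨ b i = 0)
    (hgcd : Nat.gcd (univ.gcd ⇑a) (univ.gcd ⇑b) = 1) : univ.gcd (expDiff a b) = 1 := by
  set δ := expDiff a b
  have hdvd (c : σ →₀ ℕ) (hc : ∀ i, c i = 0 ∨ δ i = c i ∨ δ i = -c i) :
      (univ.gcd δ).natAbs ∣ univ.gcd ⇑c := by
    refine Finset.dvd_gcd fun i _ => ?_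
    rw [← Int.natAbs_natCast (c i), Int.natAbs_dvd_natAbs]
    rcases hc i with h | h | h
    · rw [h, Nat.cast_zero]; exact dvd_zero _
    · exact h ▸ Finset.gcd_dvd (mem_univ i)
    · exact dvd_neg.mp (h ▸ Finset.gcd_dvd (mem_univ i))
  have h1 := Nat.dvd_one.mp (hgcd ▸ Nat.dvd_gcd
    (hdvd a fun i => by rcases hdisj i with h | h <;> simp [δ, expDiff, h])
    (hdvd b fun i => by rcases hdisj i with h | h <;> simp [δ, expDiff, h]))
  have h0 := Int.nonneg_of_normalize_eq_self (normalize_gcd (s := univ) (f := δ))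
  omega

theorem isUnit_of_support_subsingleton {K : Type*} [Field K] {f g : MvPolynomial σ K}
    (hdisj : ∀ i, a i = 0 ∨ b i = 0) (ha : a ∈ (f * g).support) (hb : b ∈ (f * g).support)
    (hf : (f.support : Set (σ →₀ ℕ)).Subsingleton) : IsUnit f := by
  classical
  obtain ⟨d, hd, e, -, rfl⟩ := mem_add.mp (support_mul f g ha)
  obtain ⟨d', hd', e', -, hb⟩ := mem_add.mp (support_mul f g hb)
  obtain rfl : d = d' := hf hd hd'
  -- `X ^ d` divides both `X ^ a` and `X ^ b`, whose supports are disjoint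
  have hd0 : d = 0 := Finsupp.ext fun i => by
    have hbi := congrArg (· i) hb
    have hai := hdisj i
    simp only [Finsupp.add_apply] at hbi hai
    simp only [Finsupp.coe_zero, Pi.zero_apply]
    omega
  subst hd0
  refine isUnit_iff.mpr ⟨(mem_support_iff.mp hd).isUnit, fun m hm => ?_⟩
  rw [notMem_support_iff.mp fun hm' => hm (hf hm' hd)]
  exact IsNilpotent.zero

variable {R : Type*} [CommSemiring R] [NoZeroDivisors R] {f g : MvPolynomial σ R}

theorem weight_sub_add_weight_sub_le (w : σ → ℤ)
    (hfg : ↑(f * g).support ⊆ ({a, b} : Set (σ →₀ ℕ)))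
    (hw : weight w b ≤ weight w a) {d d' e e' : σ →₀ ℕ} (hd : d ∈ f.support)
    (hd' : d' ∈ f.support) (he : e ∈ g.support) (he' : e' ∈ g.support) :
    weight w d - weight w d' + (weight w e - weight w e') ≤ weight w a - weight w b := by
  have hneg : ∀ x : σ →₀ ℕ, weight (-w) x = -weight w x := fun x => by
    simp [weight_apply, Finsupp.sum_neg]
  obtain ⟨m, hm, hdem⟩ := exists_mem_support_mul_add_weight_le w hd he
  obtain ⟨m', hm', hdem'⟩ := exists_mem_support_mul_add_weight_le (-w) hd' he'
  simp only [hneg] at hdem'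
  have hma : weight w m ≤ weight w a := by
    rcases hfg hm with rfl | rfl
    · exact le_rfl
    · exact hw
  have hm'b : weight w b ≤ weight w m' := by
    rcases hfg hm' with rfl | rfl
    · exact hw
    · exact le_rfl
  linarith

theorem weight_eq_of_mem_support_of_mul (w : σ → ℤ)
    (hfg : ↑(f * g).support ⊆ ({a, b} : Set (σ →₀ ℕ)))
    (hw : weight w a = weight w b) (hg : g ≠ 0) {d d' : σ →₀ ℕ} (hd : d ∈ f.support)
    (hd' : d' ∈ f.support) : weight w d = weight w d' := by
  obtain ⟨e, he⟩ := support_nonempty.mpr hg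
  have h₁ := weight_sub_add_weight_sub_le w hfg hw.ge hd hd' he he
  have h₂ := weight_sub_add_weight_sub_le w hfg hw.ge hd' hd he he
  linarith

theorem exists_expDiff_eq_smul [Fintype σ] (hgcd : univ.gcd (expDiff a b) = 1)
    (hfg : ↑(f * g).support ⊆ ({a, b} : Set (σ →₀ ℕ))) (hg : g ≠ 0)
    {d d' : σ →₀ ℕ} (hd : d ∈ f.support) (hd' : d' ∈ f.support) :
    ∃ k : ℤ, expDiff d d' = k • expDiff a b := by
  refine exists_eq_smul_of_forall_dotProduct_eq_zero hgcd fun w hw => ?_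
  rw [← weight_sub_weight, sub_eq_zero] at hw ⊢
  exact weight_eq_of_mem_support_of_mul w hfg hw hg hd hd'

theorem exists_expDiff_eq_pos_smul [Fintype σ] (hgcd : univ.gcd (expDiff a b) = 1)
    (hfg : ↑(f * g).support ⊆ ({a, b} : Set (σ →₀ ℕ))) (hg : g ≠ 0)
    (hf : (f.support : Set (σ →₀ ℕ)).Nontrivial) :
    ∃ d ∈ f.support, ∃ d' ∈ f.support, ∃ k : ℤ,
      0 < k ∧ expDiff d d' = k • expDiff a b := by
  obtain ⟨d, hd, d', hd', hne⟩ := hf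
  obtain ⟨k, hk⟩ := exists_expDiff_eq_smul hgcd hfg hg hd hd'
  rcases lt_trichotomy k 0 with hk0 | rfl | hk0
  · exact ⟨d', hd', d, hd, -k, neg_pos.mpr hk0, by rw [expDiff_swap, hk, neg_smul]⟩
  · exact absurd (expDiff_eq_zero_iff.mp (by rw [hk, zero_smul])) hne
  · exact ⟨d, hd, d', hd', k, hk0, hk⟩

theorem subsingleton_support_or_subsingleton_support [Fintype σ]
    (hgcd : univ.gcd (expDiff a b) = 1)
    (hfg : ↑(f * g).support ⊆ ({a, b} : Set (σ →₀ ℕ))) :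
    (f.support : Set (σ →₀ ℕ)).Subsingleton ∨
      (g.support : Set (σ →₀ ℕ)).Subsingleton := by
  by_contra! ⟨hf, hg⟩
  have hf0 : f ≠ 0 := fun h0 => by simp [h0] at hf
  have hg0 : g ≠ 0 := fun h0 => by simp [h0] at hg
  obtain ⟨d, hd, d', hd', k, hk, hkd⟩ := exists_expDiff_eq_pos_smul hgcd hfg hg0 hf
  obtain ⟨e, he, e', he', l, hl, hle⟩ :=
    exists_expDiff_eq_pos_smul hgcd (by rwa [mul_comm]) hf0 hg
  set δ := expDiff a b
  have hδ : 0 < δ ⬝ᵥ δ := lt_of_le_of_ne (sum_nonneg fun i _ => mul_self_nonneg (δ i))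
    (Ne.symm fun h0 => ne_zero_of_univ_gcd_eq_one hgcd (dotProduct_self_eq_zero.mp h0))
  have hwidth := weight_sub_add_weight_sub_le δ hfg
    (sub_nonneg.mp ((weight_sub_weight δ a b).symm ▸ hδ.le)) hd hd' he he'
  rw [weight_sub_weight, weight_sub_weight, weight_sub_weight, hkd, hle, dotProduct_smul,
    dotProduct_smul, smul_eq_mul, smul_eq_mul] at hwidth
  nlinarith

theorem irreducible_monomial_sub_monomial [Fintype σ] {K : Type*} [Field K]
    (hdisj : ∀ i, a i = 0 ∨ b i = 0) (hgcd : Nat.gcd (univ.gcd ⇑a) (univ.gcd ⇑b) = 1) :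
    Irreducible (monomial a (1 : K) - monomial b 1) := by
  classical
  have hδ := gcd_expDiff_eq_one hdisj hgcd
  have hab : a ≠ b := fun h => ne_zero_of_univ_gcd_eq_one hδ (expDiff_eq_zero_iff.mpr h)
  have hcoeff (m : σ →₀ ℕ) : coeff m (monomial a (1 : K) - monomial b 1) =
      (if a = m then 1 else 0) - if b = m then 1 else 0 := by
    rw [coeff_sub, coeff_monomial, coeff_monomial]
  have ha : a ∈ (monomial a (1 : K) - monomial b 1).support := by
    simp [mem_support_iff, hcoeff, hab.symm]
  have hb : b ∈ (monomial a (1 : K) - monomial b 1).support := by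
    simp [mem_support_iff, hcoeff, hab]
  have hsupp :
      ↑(monomial a (1 : K) - monomial b 1).support ⊆ ({a, b} : Set (σ →₀ ℕ)) := by
    intro m hm
    rw [mem_coe, mem_support_iff, hcoeff] at hm
    by_contra h
    simp only [Set.mem_insert_iff, Set.mem_singleton_iff, not_or] at h
    rw [if_neg (Ne.symm h.1), if_neg (Ne.symm h.2), sub_zero] at hm
    exact hm rfl
  refine ⟨fun hu => ?_, fun f g hfg => ?_⟩
  · obtain h0 | h0 : a ≠ 0 ∨ b ≠ 0 := by by_contra! h; exact hab (h.1.trans h.2.symm)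
    · exact mem_support_iff.mp ha ((isUnit_iff.mp hu).2 a h0).eq_zero
    · exact mem_support_iff.mp hb ((isUnit_iff.mp hu).2 b h0).eq_zero
  rw [hfg] at ha hb hsupp
  rcases subsingleton_support_or_subsingleton_support hδ hsupp with hf | hg
  · exact .inl (isUnit_of_support_subsingleton hdisj ha hb hf)
  · rw [mul_comm] at ha hb
    exact .inr (isUnit_of_support_subsingleton hdisj ha hb hg)

end Binomial

theorem stmt14_general (n : ℕ) (α β : Fin n → ℕ)
    (hgcd : Nat.gcd (Finset.univ.gcd α) (Finset.univ.gcd β) = 1)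
    (hdisj : ∀ j, (α j ≠ 0 → β j = 0) ∧ (β j ≠ 0 → α j = 0)) :
    Irreducible
      ((∏ j, (X j : MvPolynomial (Fin n) ℂ) ^ α j) - ∏ j, (X j : MvPolynomial (Fin n) ℂ) ^ β j) := by
  have hcoe (γ : Fin n → ℕ) : ⇑(Finsupp.indicator univ fun i _ => γ i) = γ :=
    funext fun i => by simp [Finsupp.indicator_apply]
  rw [prod_X_pow, prod_X_pow]
  refine irreducible_monomial_sub_monomial (fun i => ?_) (by rwa [hcoe, hcoe])
  rw [hcoe, hcoe]
  by_cases h : α i = 0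
  · exact .inl h
  · exact .inr ((hdisj i).1 h)

/-- Irreducibility of `t^α − t^β` for disjointly supported exponent vectors with
coprime combined entries and `α₁ ≠ 0`. -/
theorem stmt14 (n : ℕ) (hn : 0 < n) (α β : Fin n → ℕ)
    (hα1 : α ⟨0, hn⟩ ≠ 0)
    (hgcd : Nat.gcd (Finset.univ.gcd α) (Finset.univ.gcd β) = 1)
    (hdisj : ∀ j, (α j ≠ 0 → β j = 0) ∧ (β j ≠ 0 → α j = 0)) :
    Irreducible
      ((∏ j, (X j : MvPolynomial (Fin n) ℂ) ^ α j) - ∏ j, (X j : MvPolynomial (Fin n) ℂ) ^ β j) :=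
  stmt14_general n α β hgcd hdisj
end

section
/- Let F be a field of characteristic 0, let c be an element of an extension field of F with c^N ∈ F for some N ≥ 2, and suppose c^N is not a d-th power in F for any divisor d ≥ 2 of N. Then c^s ∉ F for all 1 ≤ s < N. -/
/-- If `c` lies in an extension of `F`, `c^N ∈ F` for some `N ≥ 2`, and `c^N` is not a
`d`-th power in `F` for any divisor `d ≥ 2` of `N`, then `c^s ∉ F` for `1 ≤ s < N`. -/
theorem stmt15 (F E : Type*) [Field F] [Field E] [CharZero F] [Algebra F E]
    (c : E) (N : ℕ) (hN : 2 ≤ N) (hcN : ∃ a : F, algebraMap F E a = c ^ N)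
    (hpow : ∀ d : ℕ, 2 ≤ d → d ∣ N → ¬∃ y : F, algebraMap F E (y ^ d) = c ^ N)
    (s : ℕ) (hs1 : 1 ≤ s) (hsN : s < N) :
    c ^ s ∉ Set.range (algebraMap F E) := by
  rintro ⟨x, hx⟩
  obtain ⟨a, ha⟩ := hcN
  -- first handle c = 0
  by_cases hc : c = 0
  · exact hpow N hN dvd_rfl ⟨0, by simp [hc, zero_pow (by omega : N ≠ 0)]⟩
  -- K = field range of algebraMap
  set K := (algebraMap F E).fieldRange with hK
  have hs' : c ^ s ∈ K := ⟨x, hx⟩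
  have hN' : c ^ N ∈ K := ⟨a, ha⟩
  set g := Nat.gcd s N with hg
  have hg0 : 0 < g := Nat.gcd_pos_of_pos_left N hs1
  have hgN : g ∣ N := Nat.gcd_dvd_right s N
  have hgltN : g < N := lt_of_le_of_lt (Nat.le_of_dvd (by omega) (Nat.gcd_dvd_left s N)) hsN
  -- c ^ g ∈ K via Bezout
  have hbez : (g : ℤ) = s * Nat.gcdA s N + N * Nat.gcdB s N := Nat.gcd_eq_gcd_ab s N
  have hzpow : (c : E) ^ (g : ℤ) = (c ^ s) ^ (Nat.gcdA s N) * (c ^ N) ^ (Nat.gcdB s N) := by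
    rw [hbez, zpow_add₀ hc, zpow_mul, zpow_mul]
    norm_num
  have hgK : c ^ g ∈ K := by
    have : (c : E) ^ (g : ℤ) ∈ K := by
      rw [hzpow]
      exact mul_mem (zpow_mem hs' _) (zpow_mem hN' _)
    rwa [zpow_natCast] at this
  obtain ⟨y, hy⟩ := hgK
  -- d = N / g
  obtain ⟨d, hd⟩ := hgN
  have hd2 : 2 ≤ d := by
    rcases Nat.lt_or_ge d 2 with h | h
    · interval_cases d <;> omega
    · exact h
  refine hpow d hd2 ⟨g, hd.trans (mul_comm g d)⟩ ⟨y, ?_⟩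
  rw [map_pow, hy, ← pow_mul, ← hd]
end

section
/- Let B ∈ ℤ^{n×n} with det B > 0 and each row of gcd 1, let B₊ = max{B,0}, B₋ = max{-B,0} elementwise, A = adj B, and ξ_j = ⌈(∑_{k=1}^n |b^k_j|)/det B⌉. Define C_B(ν) = ∏_{j=1}^n D_{det B}((ν − 2·𝟙B₋ + 𝟙)·a_j − 1) for ν ∈ ℤ^{1×n}, where a_j is the j-th column of A and 𝟙 = (1,...,1). Then C_B(ν) = 0 unless −1 + ξ_j ≤ ν_j ≤ 2∑_{k=1}^n |b^k_j| − 1 − ξ_j for every 1 ≤ j ≤ n. -/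
lemma Dk_eq_zero_of_neg (k : ℕ) (r : ℤ) (hr : r < 0) : Dk k r = 0 := by
  simp [Dk, not_le.mpr hr]

lemma Dk_eq_zero_of_gt (k : ℕ) (r : ℤ) (hr : 2 * (k : ℤ) - 2 < r) : Dk k r = 0 := by
  rcases Nat.eq_zero_or_pos k with hk | hk
  · subst hk; simp [Dk]
  rcases lt_or_ge r 0 with h | h
  · exact Dk_eq_zero_of_neg k r h
  · rw [Dk, if_pos h]
    apply Polynomial.coeff_eq_zero_of_natDegree_lt
    have hp : (∑ i ∈ Finset.range k, (Polynomial.X : Polynomial ℤ) ^ i).natDegree ≤ k - 1 := by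
      apply Polynomial.natDegree_sum_le_of_forall_le
      intro i hi
      simpa using Nat.le_pred_of_lt (Finset.mem_range.mp hi)
    have h2 : ((∑ i ∈ Finset.range k, (Polynomial.X : Polynomial ℤ) ^ i) ^ 2).natDegree ≤ 2 * (k - 1) :=
      le_trans Polynomial.natDegree_pow_le (Nat.mul_le_mul_left 2 hp)
    have h3 : 2 * (k - 1) < r.toNat := by omega
    exact lt_of_le_of_lt h2 h3

/-- The coefficients `C_B(ν)` vanish unless `−1 + ξ_j ≤ ν_j ≤ 2∑_k |b^k_j| − 1 − ξ_j`
for every `j`, where `ξ_j = ⌈(∑_k |b^k_j|)/det B⌉`. -/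
theorem stmt17 (n : ℕ) (hn : 2 ≤ n) (B : Matrix (Fin n) (Fin n) ℤ) (hB : 0 < B.det)
    (hgcd : ∀ j, Finset.univ.gcd (fun k => B j k) = 1) (ν : Fin n → ℤ)
    (hν : ¬ ∀ j : Fin n,
        -1 + ⌈((∑ k, |B k j| : ℤ) : ℚ) / (B.det : ℚ)⌉ ≤ ν j ∧
        ν j ≤ 2 * (∑ k, |B k j|) - 1 - ⌈((∑ k, |B k j| : ℤ) : ℚ) / (B.det : ℚ)⌉) :
    (∏ j, Dk B.det.toNat
        ((∑ k, (ν k - 2 * (∑ i, max (-(B i k)) 0) + 1) * B.adjugate k j) - 1)) = 0 := by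
  by_contra hprod
  apply hν
  set d : ℤ := B.det with hd
  have hdpos : (0 : ℤ) < d := hB
  have hkd : ((d.toNat : ℤ)) = d := Int.toNat_of_nonneg hdpos.le
  set u : Fin n → ℤ := fun k => ν k - 2 * (∑ i, max (-(B i k)) 0) + 1 with hu
  set w : Fin n → ℤ := fun j => ∑ k, u k * B.adjugate k j with hwdef
  have hbw : ∀ j, (∑ k, (ν k - 2 * (∑ i, max (-(B i k)) 0) + 1) * B.adjugate k j) = w j :=
    fun j => rfl
  -- bounds on w from nonvanishing of factors
  have hwlb : ∀ j, 1 ≤ w j := by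
    intro j
    by_contra hc
    push_neg at hc
    refine hprod (Finset.prod_eq_zero (Finset.mem_univ j) (Dk_eq_zero_of_neg _ _ ?_))
    rw [hbw j]
    omega
  have hwub : ∀ j, w j ≤ 2 * d - 1 := by
    intro j
    by_contra hc
    push_neg at hc
    refine hprod (Finset.prod_eq_zero (Finset.mem_univ j) (Dk_eq_zero_of_gt _ _ ?_))
    rw [hkd, hbw j]
    omega
  -- key identity: d * u j = ∑ k, w k * B k j
  have hkey : ∀ j, d * u j = ∑ k, w k * B k j := by
    intro j
    have hAB : ∀ l, (∑ k, B.adjugate l k * B k j) = if l = j then d else 0 := by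
      intro l
      have h := congrFun (congrFun (Matrix.adjugate_mul B) l) j
      rw [Matrix.mul_apply] at h
      simpa [Matrix.smul_apply, Matrix.one_apply, mul_ite, mul_one, mul_zero] using h
    symm
    calc ∑ k, w k * B k j = ∑ k, ∑ l, (u l * B.adjugate l k) * B k j := by
          simp only [hwdef, Finset.sum_mul]
      _ = ∑ l, ∑ k, u l * (B.adjugate l k * B k j) := by
          rw [Finset.sum_comm]
          simp [mul_assoc]
      _ = ∑ l, u l * (if l = j then d else 0) := by
          simp only [← Finset.mul_sum, hAB]
      _ = d * u j := by simp [Finset.sum_ite_eq', mul_comm]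
  intro j
  set S : ℤ := ∑ k, |B k j| with hS
  set m : ℤ := ∑ k, max (-(B k j)) 0 with hm
  set p : ℤ := ∑ k, max (B k j) 0 with hp
  set q : ℤ := ∑ k, B k j with hq
  have habs1 : S = q + 2 * m := by
    rw [hS, hq, hm, Finset.mul_sum, ← Finset.sum_add_distrib]
    refine Finset.sum_congr rfl fun k _ => ?_
    rcases le_or_gt 0 (B k j) with h | h
    · rw [abs_of_nonneg h, max_eq_right (by omega)]; ring
    · rw [abs_of_neg h, max_eq_left (by omega)]; ring
  have habs2 : S = 2 * p - q := by
    rw [hS, hq, hp, Finset.mul_sum, ← Finset.sum_sub_distrib]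
    refine Finset.sum_congr rfl fun k _ => ?_
    rcases le_or_gt 0 (B k j) with h | h
    · rw [abs_of_nonneg h, max_eq_left (by omega)]; ring
    · rw [abs_of_neg h, max_eq_right (by omega)]; ring
  -- lower bound
  have hlow : q - (2 * d - 2) * m ≤ d * u j := by
    rw [hkey j, hq, hm, Finset.mul_sum, ← Finset.sum_sub_distrib]
    refine Finset.sum_le_sum fun k _ => ?_
    have h1 := hwlb k
    have h2 := hwub k
    rcases le_or_gt 0 (B k j) with h | h
    · rw [max_eq_right (by omega)]
      nlinarith
    · rw [max_eq_left (by omega)]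
      nlinarith
  have hhigh : d * u j ≤ q + (2 * d - 2) * p := by
    rw [hkey j, hq, hp, Finset.mul_sum, ← Finset.sum_add_distrib]
    refine Finset.sum_le_sum fun k _ => ?_
    have h1 := hwlb k
    have h2 := hwub k
    rcases le_or_gt 0 (B k j) with h | h
    · rw [max_eq_left (by omega)]
      nlinarith
    · rw [max_eq_right (by omega)]
      nlinarith
  have huj : u j = ν j - 2 * m + 1 := rfl
  have hL : S ≤ d * (ν j + 1) := by nlinarith
  have hH : S ≤ d * (2 * S - 1 - ν j) := by nlinarith
  have hdq : (0 : ℚ) < (d : ℚ) := by exact_mod_cast hdpos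
  constructor
  · have : ⌈((S : ℤ) : ℚ) / (d : ℚ)⌉ ≤ ν j + 1 := by
      rw [Int.ceil_le, div_le_iff₀ hdq]
      have hL' : ((S : ℚ)) ≤ ((d * (ν j + 1) : ℤ) : ℚ) := by exact_mod_cast hL
      push_cast at hL' ⊢
      nlinarith [hL']
    omega
  · have : ⌈((S : ℤ) : ℚ) / (d : ℚ)⌉ ≤ 2 * S - 1 - ν j := by
      rw [Int.ceil_le, div_le_iff₀ hdq]
      have hH' : ((S : ℚ)) ≤ ((d * (2 * S - 1 - ν j) : ℤ) : ℚ) := by exact_mod_cast hH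
      push_cast at hH' ⊢
      nlinarith [hH']
    omega
end

section
/- Let B ∈ ℤ^{n×n} with det B > 0, B₊ = max{B,0}, B₋ = max{-B,0}, |B| = B₊ + B₋, A = adj B, 𝟙 = (1,...,1), α = (2·𝟙B₋ − 𝟙)A + 𝟙 and β = (2 det B − 1)·𝟙 + (2·𝟙B₋ − 𝟙)A. Then αB₊ − βB₋ = 𝟙|B| − det B · 𝟙 and βB₊ − αB₋ = (2 det B − 1)·𝟙|B| − det B · 𝟙. -/
open Matrix

/-! Write `B = B₊ - B₋`, so that `B₊ = B + B₋` and `|B| = B + 2B₋`, and put `w = 2·𝟙B₋ - 𝟙`,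
so that `α = wA + 𝟙` and `β = (2 det B - 1)·𝟙 + wA`. Expanding `αB₊ - βB₋` and `βB₊ - αB₋`,
the terms `wAB₋` cancel and `wA` survives only in `wAB = det B · w`; what is left is linear
algebra in the row vectors `𝟙B`, `𝟙B₋` and `𝟙`. -/

section
variable {ι R : Type*} [Fintype ι] [CommRing R]

theorem Matrix.vecMul_adjugate_vecMul [DecidableEq ι] (w : ι → R) (B : Matrix ι ι R) :
    w ᵥ* B.adjugate ᵥ* B = B.det • w := by
  rw [vecMul_vecMul, adjugate_mul, vecMul_smul, vecMul_one]

theorem vecMul_posPart_sub_vecMul_negPart_eq {u v : ι → R} {d : R} {B P N : Matrix ι ι R}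
    (hB : P - N = B) (hv : v ᵥ* B = d • (2 • u ᵥ* N - u)) :
    (v + u) ᵥ* P - ((2 * d - 1) • u + v) ᵥ* N = u ᵥ* (P + N) - d • u ∧
      ((2 * d - 1) • u + v) ᵥ* P - (v + u) ᵥ* N = (2 * d - 1) • u ᵥ* (P + N) - d • u := by
  rw [eq_add_of_sub_eq hB]
  simp only [add_vecMul, vecMul_add, smul_vecMul, hv]
  exact ⟨by module, by module⟩

end

theorem stmt18_general (n : ℕ) (B : Matrix (Fin n) (Fin n) ℤ) :
    let Bp : Matrix (Fin n) (Fin n) ℤ := fun i k => max (B i k) 0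
    let Bm : Matrix (Fin n) (Fin n) ℤ := fun i k => max (-(B i k)) 0
    let absB : Matrix (Fin n) (Fin n) ℤ := Bp + Bm
    let one : Fin n → ℤ := fun _ => 1
    let α : Fin n → ℤ := (fun k => 2 * (one ᵥ* Bm) k - 1) ᵥ* B.adjugate + one
    let β : Fin n → ℤ :=
      (fun _ => 2 * B.det - 1) + (fun k => 2 * (one ᵥ* Bm) k - 1) ᵥ* B.adjugate
    (∀ j, (α ᵥ* Bp) j - (β ᵥ* Bm) j = (one ᵥ* absB) j - B.det) ∧
      (∀ j, (β ᵥ* Bp) j - (α ᵥ* Bm) j = (2 * B.det - 1) * (one ᵥ* absB) j - B.det) := by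
  intro Bp Bm absB one α β
  set w : Fin n → ℤ := 2 • one ᵥ* Bm - one
  have hα : α = w ᵥ* B.adjugate + one := rfl
  have hβ : β = (2 * B.det - 1) • one + w ᵥ* B.adjugate := by
    show (fun _ => 2 * B.det - 1) + w ᵥ* B.adjugate = _
    congr 1
    ext
    simp [one]
  have hB : Bp - Bm = B := by
    ext i k
    exact max_zero_sub_max_neg_zero_eq_self (B i k)
  obtain ⟨h₁, h₂⟩ := vecMul_posPart_sub_vecMul_negPart_eq hB (vecMul_adjugate_vecMul w B)
  rw [hα, hβ]
  exact ⟨fun j => by simpa [one] using congrFun h₁ j, fun j => by simpa [one] using congrFun h₂ j⟩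

/-- With `α = (2·𝟙B₋ − 𝟙)A + 𝟙` and `β = (2 det B − 1)·𝟙 + (2·𝟙B₋ − 𝟙)A`, where
`A = adj B`: `αB₊ − βB₋ = 𝟙|B| − det B·𝟙` and `βB₊ − αB₋ = (2 det B − 1)·𝟙|B| − det B·𝟙`. -/
theorem stmt18 (n : ℕ) (B : Matrix (Fin n) (Fin n) ℤ) (hB : 0 < B.det) :
    let Bp : Matrix (Fin n) (Fin n) ℤ := fun i k => max (B i k) 0
    let Bm : Matrix (Fin n) (Fin n) ℤ := fun i k => max (-(B i k)) 0
    let absB : Matrix (Fin n) (Fin n) ℤ := Bp + Bm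
    let one : Fin n → ℤ := fun _ => 1
    let α : Fin n → ℤ := (fun k => 2 * (one ᵥ* Bm) k - 1) ᵥ* B.adjugate + one
    let β : Fin n → ℤ :=
      (fun _ => 2 * B.det - 1) + (fun k => 2 * (one ᵥ* Bm) k - 1) ᵥ* B.adjugate
    (∀ j, (α ᵥ* Bp) j - (β ᵥ* Bm) j = (one ᵥ* absB) j - B.det) ∧
      (∀ j, (β ᵥ* Bp) j - (α ᵥ* Bm) j = (2 * B.det - 1) * (one ᵥ* absB) j - B.det) :=
  stmt18_general n B
end

section
/- Let k₁,...,k_n be positive integers with gcd(k₁,...,k_n) = 1, K = lcm(k₁,...,k_n), and ℓ_a = K/k_a. Then for any integers ν₁, ν_j (j ≥ 2): (a) D_K(2K − ℓ₁(ν₁+1) − 1) = ℓ₁·D_{k₁}(ν₁); and (b) k_j·D_{ℓ_j}(ℓ_j(ν_j+1) + ℓ₁(ν₁+1) − 2K − 1) = ℓ₁·D_{k₁}(k₁(ν_j+1) + k_j(ν₁+1−2k₁) − 1). -/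
lemma coeff_sq_geom (k m : ℕ) :
    ((∑ i ∈ Finset.range k, (Polynomial.X : Polynomial ℤ) ^ i) ^ 2).coeff m
      = ((min (m+1) k - (m+1-k) : ℕ) : ℤ) := by
  have hc : ∀ n : ℕ, (∑ i ∈ Finset.range k, (Polynomial.X : Polynomial ℤ)^i).coeff n
      = if n < k then 1 else 0 := by
    intro n
    simp [Polynomial.finset_sum_coeff, Polynomial.coeff_X_pow, Finset.sum_ite_eq]
  rw [sq, Polynomial.coeff_mul, Finset.Nat.sum_antidiagonal_eq_sum_range_succ_mk]
  simp only [hc]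
  have : ∀ i ∈ Finset.range (m+1),
      (if i < k then (1:ℤ) else 0) * (if m - i < k then 1 else 0)
        = if i < k ∧ m - i < k then 1 else 0 := by
    intro i _; split_ifs with h1 h2 h3 <;> simp_all
  rw [Finset.sum_congr rfl this, Finset.sum_ite, Finset.sum_const, Finset.sum_const]
  have hset : (Finset.range (m+1)).filter (fun i => i < k ∧ m - i < k)
      = Finset.Ico (m+1-k) (min (m+1) k) := by
    ext i; simp [Finset.mem_filter, Finset.mem_range, Finset.mem_Ico]; omega
  rw [hset, Nat.card_Ico]
  simp

lemma Dk_eq (k : ℕ) (r : ℤ) : Dk k r = max 0 (min (r+1) (2*(k:ℤ)-1-r)) := by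
  unfold Dk
  split_ifs with h
  · rw [coeff_sq_geom]
    have hr : (r.toNat : ℤ) = r := Int.toNat_of_nonneg h
    rw [← hr]; push_cast
    omega
  · omega

lemma mul_maxmin (c a b : ℤ) (hc : 0 ≤ c) :
    c * max 0 (min a b) = max 0 (min (c*a) (c*b)) := by
  rw [mul_max_of_nonneg _ _ hc, mul_min_of_nonneg _ _ hc, mul_zero]

/-- The two `D`-function identities used to recapture the kernel of signature-1 domains. -/
theorem stmt19 (n : ℕ) (hn : 0 < n) (k : Fin n → ℕ) (hk : ∀ a, 0 < k a)
    (hgcd : Finset.univ.gcd k = 1) :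
    let K : ℕ := Finset.univ.lcm k
    let ℓ : Fin n → ℕ := fun a => K / k a
    let i1 : Fin n := ⟨0, hn⟩
    (∀ ν₁ : ℤ,
      Dk K (2 * K - (ℓ i1 : ℤ) * (ν₁ + 1) - 1) = (ℓ i1 : ℤ) * Dk (k i1) ν₁) ∧
    (∀ j : Fin n, j ≠ i1 → ∀ ν₁ νj : ℤ,
      (k j : ℤ) * Dk (ℓ j) ((ℓ j : ℤ) * (νj + 1) + (ℓ i1 : ℤ) * (ν₁ + 1) - 2 * K - 1) =
        (ℓ i1 : ℤ) * Dk (k i1)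
          ((k i1 : ℤ) * (νj + 1) + (k j : ℤ) * (ν₁ + 1 - 2 * (k i1 : ℤ)) - 1)) := by
  intro K ℓ i1
  have hdvd : ∀ a, (k a : ℤ) * (ℓ a : ℤ) = (K : ℤ) := by
    intro a
    have h : k a ∣ K := Finset.dvd_lcm (Finset.mem_univ a)
    exact_mod_cast congrArg (Nat.cast : ℕ → ℤ) (Nat.mul_div_cancel' h)
  have h1 := hdvd i1
  constructor
  · intro ν₁
    rw [Dk_eq, Dk_eq, mul_maxmin _ _ _ (Int.natCast_nonneg _)]
    have e1 : 2*(K:ℤ) - (ℓ i1:ℤ)*(ν₁+1) - 1 + 1 = (ℓ i1:ℤ)*(2*(k i1:ℤ)-1-ν₁) := by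
      linear_combination -2*h1
    have e2 : 2*(K:ℤ)-1-(2*(K:ℤ) - (ℓ i1:ℤ)*(ν₁+1) - 1) = (ℓ i1:ℤ)*(ν₁+1) := by ring
    rw [e1, e2, min_comm]
  · intro j _ ν₁ νj
    have hj := hdvd j
    rw [Dk_eq, Dk_eq, mul_maxmin _ _ _ (Int.natCast_nonneg _),
      mul_maxmin _ _ _ (Int.natCast_nonneg _)]
    congr 1
    congr 1
    · linear_combination (νj+1)*hj + (2*(k j:ℤ) - (νj+1))*h1
    · linear_combination (1-νj)*hj + ((νj:ℤ) - 1 - 2*(k j:ℤ))*h1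
end
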